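/- Let N ≥ 1 and let P1, P2, P4 be N×N complex matrices such that P1 is unitary (P1†·P1 = I_N), P2 ≠ P4, and (P4−P2)† · (P4−P2) = (‖P4−P2‖_F² / N) · I_N. Then the block matrix [[I_N, P1·P2],[I_N, P1·P4]] is invertible and [[I_N, P1·P2],[I_N, P1·P4]]^{−1} · G(P1,P2,P1,P4) = [[I_N, P1, 0_N],[0_N, 0_N, I_N]] · Ā, where the right-hand left factor is the indicated 2N×3N block matrix. -/

import Mathlib

open Matrix

noncomputable section

/-- Squared Frobenius norm of a complex matrix. -/
def frobSq {m n : ℕ} (X : Matrix (Fin m) (Fin n) ℂ) : ℝ :=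
  ∑ i, ∑ j, Complex.normSq (X i j)

/-- The 3N × (3N-1) bidiagonal matrix `Ā` of the paper (0-indexed):
`-1` on the diagonal, `1` on the subdiagonal, zeros elsewhere. -/
def Abar (N : ℕ) : Matrix (Fin (3 * N)) (Fin (3 * N - 1)) ℂ :=
  Matrix.of fun i j =>
    if i.val = j.val then -1 else if i.val = j.val + 1 then 1 else 0

/-- 2N × 3N block matrix `[[A, B, C], [D, E, F]]` built out of N × N blocks. -/
def blk23 {N : ℕ} (A B C D E F : Matrix (Fin N) (Fin N) ℂ) :
    Matrix (Fin (2 * N)) (Fin (3 * N)) ℂ :=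
  Matrix.of fun i j =>
    if hi : i.val < N then
      if hj : j.val < N then A ⟨i.val, hi⟩ ⟨j.val, hj⟩
      else if hj2 : j.val < 2 * N then B ⟨i.val, hi⟩ ⟨j.val - N, by omega⟩
      else C ⟨i.val, hi⟩ ⟨j.val - 2 * N, by have := j.isLt; omega⟩
    else
      if hj : j.val < N then D ⟨i.val - N, by have := i.isLt; omega⟩ ⟨j.val, hj⟩
      else if hj2 : j.val < 2 * N then
        E ⟨i.val - N, by have := i.isLt; omega⟩ ⟨j.val - N, by omega⟩
      else F ⟨i.val - N, by have := i.isLt; omega⟩ ⟨j.val - 2 * N, by have := j.isLt; omega⟩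

/-- 2N × 2N block matrix `[[A, B], [C, D]]` built out of N × N blocks. -/
def blk22 {N : ℕ} (A B C D : Matrix (Fin N) (Fin N) ℂ) :
    Matrix (Fin (2 * N)) (Fin (2 * N)) ℂ :=
  Matrix.of fun i j =>
    if hi : i.val < N then
      if hj : j.val < N then A ⟨i.val, hi⟩ ⟨j.val, hj⟩
      else B ⟨i.val, hi⟩ ⟨j.val - N, by have := j.isLt; omega⟩
    else
      if hj : j.val < N then C ⟨i.val - N, by have := i.isLt; omega⟩ ⟨j.val, hj⟩
      else D ⟨i.val - N, by have := i.isLt; omega⟩ ⟨j.val - N, by have := j.isLt; omega⟩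

/-- The 2N × (3N-1) matrix `G(P1, P2, P3, P4) = [[I, P1, P1·P2], [I, P3, P3·P4]] · Ā`. -/
def Gmat {N : ℕ} (P1 P2 P3 P4 : Matrix (Fin N) (Fin N) ℂ) :
    Matrix (Fin (2 * N)) (Fin (3 * N - 1)) ℂ :=
  blk23 1 P1 (P1 * P2) 1 P3 (P3 * P4) * Abar N

/-- The 1 × N all-ones row vector `w`. -/
def wrow (N : ℕ) : Matrix (Fin 1) (Fin N) ℂ :=
  Matrix.of fun _ _ => 1

/-!
Write `D = P4 - P2`. Since `Dᴴ D` is a scalar and `D ≠ 0`, the scalar is nonzero and `D` is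
invertible; hence so is `P1 D`, which is the Schur complement of the top-left identity block in
`M = [[I, P1 P2], [I, P1 P4]]`. The identity then comes from the factorisation
`[[I, P1, P1 P2], [I, P1, P1 P4]] = M · [[I, P1, 0], [0, 0, I]]`.
-/

open scoped ComplexOrder in
theorem Matrix.isUnit_of_conjTranspose_mul_self_eq_smul_one {n 𝕜 : Type*} [Fintype n]
    [DecidableEq n] [RCLike 𝕜] {A : Matrix n n 𝕜} (hA : A ≠ 0) {c : 𝕜}
    (h : Aᴴ * A = c • 1) : IsUnit A := by
  have hc : c ≠ 0 := by
    rintro rfl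
    exact hA (conjTranspose_mul_self_eq_zero.1 (by rw [h, zero_smul]))
  refine (isUnit_iff_isUnit_det A).2 (isUnit_det_of_left_inverse (B := c⁻¹ • Aᴴ) ?_)
  rw [smul_mul, h, smul_smul, inv_mul_cancel₀ hc, one_smul]

def finSumFinEquivTwoMul (N : ℕ) : Fin N ⊕ Fin N ≃ Fin (2 * N) :=
  finSumFinEquiv.trans (finCongr (two_mul N).symm)

def finSumSumEquivThreeMul (N : ℕ) : Fin N ⊕ (Fin N ⊕ Fin N) ≃ Fin (3 * N) :=
  (Equiv.sumCongr (Equiv.refl _) (finSumFinEquivTwoMul N)).trans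
    (finSumFinEquiv.trans (finCongr (by ring)))

section BlockIndices

variable {N : ℕ} (a : Fin N)

@[simp] lemma finSumFinEquivTwoMul_inl_val : (finSumFinEquivTwoMul N (.inl a)).val = a := by
  simp [finSumFinEquivTwoMul]

@[simp] lemma finSumFinEquivTwoMul_inr_val :
    (finSumFinEquivTwoMul N (.inr a)).val = N + a := by
  simp [finSumFinEquivTwoMul, add_comm]

@[simp] lemma finSumSumEquivThreeMul_inl_val :
    (finSumSumEquivThreeMul N (.inl a)).val = a := by
  simp [finSumSumEquivThreeMul]

@[simp] lemma finSumSumEquivThreeMul_inr_inl_val :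
    (finSumSumEquivThreeMul N (.inr (.inl a))).val = N + a := by
  simp [finSumSumEquivThreeMul]

@[simp] lemma finSumSumEquivThreeMul_inr_inr_val :
    (finSumSumEquivThreeMul N (.inr (.inr a))).val = N + (N + a) := by
  simp [finSumSumEquivThreeMul]

end BlockIndices

section Blocks

variable {N : ℕ}

lemma blk22_eq_submatrix_fromBlocks (A B C D : Matrix (Fin N) (Fin N) ℂ) :
    blk22 A B C D =
      (fromBlocks A B C D).submatrix (finSumFinEquivTwoMul N).symm
        (finSumFinEquivTwoMul N).symm := by
  ext i j
  obtain ⟨x, rfl⟩ := (finSumFinEquivTwoMul N).surjective i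
  obtain ⟨y, rfl⟩ := (finSumFinEquivTwoMul N).surjective j
  rcases x with a | a <;> rcases y with b | b <;> simp [blk22]

lemma blk23_eq_submatrix_fromBlocks (A B C D E F : Matrix (Fin N) (Fin N) ℂ) :
    blk23 A B C D E F =
      (fromBlocks A (fromCols B C) D (fromCols E F)).submatrix
        (finSumFinEquivTwoMul N).symm (finSumSumEquivThreeMul N).symm := by
  ext i j
  obtain ⟨x, rfl⟩ := (finSumFinEquivTwoMul N).surjective i
  obtain ⟨y, rfl⟩ := (finSumSumEquivThreeMul N).surjective j
  rcases x with a | a <;> rcases y with b | b | b <;> simp [blk23, two_mul, Nat.add_sub_add_left]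

lemma blk22_mul_blk23 (A B C D E F G H I J : Matrix (Fin N) (Fin N) ℂ) :
    blk22 A B C D * blk23 E F G H I J =
      blk23 (A * E + B * H) (A * F + B * I) (A * G + B * J)
        (C * E + D * H) (C * F + D * I) (C * G + D * J) := by
  have fromCols_add (X Y Z W : Matrix (Fin N) (Fin N) ℂ) :
      fromCols X Y + fromCols Z W = fromCols (X + Z) (Y + W) := by
    ext i (j | j) <;> simp
  rw [blk22_eq_submatrix_fromBlocks, blk23_eq_submatrix_fromBlocks,
    blk23_eq_submatrix_fromBlocks, submatrix_mul_equiv, fromBlocks_multiply]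
  simp only [mul_fromCols, fromCols_add]

lemma isUnit_blk22_one_one_iff (B D : Matrix (Fin N) (Fin N) ℂ) :
    IsUnit (blk22 1 B 1 D) ↔ IsUnit (D - B) := by
  have : Invertible (1 : Matrix (Fin N) (Fin N) ℂ) := invertibleOne
  rw [blk22_eq_submatrix_fromBlocks, isUnit_submatrix_equiv,
    isUnit_fromBlocks_iff_of_invertible₁₁, invOf_one, one_mul, one_mul]

end Blocks

theorem stmt4_general (N : ℕ) (P1 P2 P4 : Matrix (Fin N) (Fin N) ℂ)
    (hP1 : P1ᴴ * P1 = 1) (hne : P2 ≠ P4)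
    (hcond : (P4 - P2)ᴴ * (P4 - P2) = ((frobSq (P4 - P2) / (N : ℝ) : ℝ) : ℂ) • 1) :
    IsUnit (blk22 1 (P1 * P2) 1 (P1 * P4)) ∧
      (blk22 1 (P1 * P2) 1 (P1 * P4))⁻¹ * Gmat P1 P2 P1 P4 =
        blk23 1 P1 0 0 0 1 * Abar N := by
  have hdiff : IsUnit (P4 - P2) :=
    isUnit_of_conjTranspose_mul_self_eq_smul_one (sub_ne_zero.2 hne.symm) hcond
  have hunit : IsUnit P1 := (isUnit_iff_isUnit_det P1).2 (isUnit_det_of_left_inverse hP1)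
  have hM : IsUnit (blk22 1 (P1 * P2) 1 (P1 * P4)) := by
    rw [isUnit_blk22_one_one_iff, ← Matrix.mul_sub]
    exact hunit.mul hdiff
  have hfactor : blk22 1 (P1 * P2) 1 (P1 * P4) * blk23 1 P1 0 0 0 1 =
      blk23 1 P1 (P1 * P2) 1 P1 (P1 * P4) := by
    rw [blk22_mul_blk23]; simp
  refine ⟨hM, ?_⟩
  rw [Gmat, ← hfactor, ← Matrix.mul_assoc, ← Matrix.mul_assoc,
    nonsing_inv_mul _ ((isUnit_iff_isUnit_det _).1 hM), Matrix.one_mul]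

theorem stmt4 (N : ℕ) (hN : 1 ≤ N) (P1 P2 P4 : Matrix (Fin N) (Fin N) ℂ)
    (hP1 : P1ᴴ * P1 = 1) (hne : P2 ≠ P4)
    (hcond : (P4 - P2)ᴴ * (P4 - P2) = ((frobSq (P4 - P2) / (N : ℝ) : ℝ) : ℂ) • 1) :
    IsUnit (blk22 1 (P1 * P2) 1 (P1 * P4)) ∧
      (blk22 1 (P1 * P2) 1 (P1 * P4))⁻¹ * Gmat P1 P2 P1 P4 =
        blk23 1 P1 0 0 0 1 * Abar N :=
  stmt4_general N P1 P2 P4 hP1 hne hcond
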